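/- arXiv:2211.08324 — 2 statements merged into one kernel-verified Lean document; each statement's English description precedes it below -/
import Mathlib

section
/- Let p ≥ 1 and q ≥ 0 be integers and let H' ⊆ E ∖ H. Then every terminal pair (s_i, t_i) is (p, q + 1)-flex-connected in H ∪ H' if and only if H' covers all violated cuts, i.e. δ_{H'}(S) ≠ ∅ for every violated vertex set S. -/
open scoped Classical

/-- The edges of `H` with exactly one endpoint in `S` (the cut `δ_H(S)`).
Edges are abstract objects of type `E` with endpoint maps `g₁ g₂ : E → V`. -/
noncomputable def cutEdges {V E : Type*} (g₁ g₂ : E → V) (H : Finset E) (S : Finset V) :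
    Finset E :=
  H.filter fun e => (g₁ e ∈ S) ≠ (g₂ e ∈ S)

/-- `u` and `v` are connected by a path using only edges of `H`. -/
def ConnectedIn {V E : Type*} (g₁ g₂ : E → V) (H : Finset E) (u v : V) : Prop :=
  Relation.ReflTransGen (fun a b => ∃ e ∈ H, (g₁ e = a ∧ g₂ e = b) ∨ (g₁ e = b ∧ g₂ e = a)) u v

/-- `u` and `v` are `p`-edge-connected in `H`: for every `D ⊆ H` with `|D| ≤ p - 1`,
`u` and `v` are connected in `H \ D`. -/
def PEdgeConnected {V E : Type*} (g₁ g₂ : E → V) (p : ℕ) (H : Finset E) (u v : V) : Prop :=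
  ∀ D : Finset E, D ⊆ H → D.card ≤ p - 1 → ConnectedIn g₁ g₂ (H \ D) u v

/-- `u` and `v` are `(p,q)`-flex-connected in `H` (with unsafe edge set `Unsafe`):
for every `U ⊆ Unsafe` with `|U| ≤ q`, `u` and `v` are `p`-edge-connected in `H \ U`. -/
def FlexConnected {V E : Type*} (g₁ g₂ : E → V) (Unsafe : Finset E) (p q : ℕ)
    (H : Finset E) (u v : V) : Prop :=
  ∀ U : Finset E, U ⊆ Unsafe → U.card ≤ q → PEdgeConnected g₁ g₂ p (H \ U) u v

/-- A vertex set `S` is violated (w.r.t. the partial solution `H`, safe edges `Safe`,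
parameters `p q` and terminal pairs `st`): exactly one of `s_i, t_i` lies in `S` for
some `i`, `|δ_H(S)| = p + q`, and `|δ_H(S) ∩ Safe| ≤ p - 1`. -/
def Violated {V E : Type*} (g₁ g₂ : E → V) (Safe : Finset E) (p q : ℕ) {k : ℕ}
    (st : Fin k → V × V) (H : Finset E) (S : Finset V) : Prop :=
  (∃ i : Fin k, ((st i).1 ∈ S) ≠ ((st i).2 ∈ S)) ∧
    (cutEdges g₁ g₂ H S).card = p + q ∧
    (cutEdges g₁ g₂ H S ∩ Safe).card ≤ p - 1

/-!
An adversary against `(p, q)`-flex-connectivity of `u, v` best spends its budget on a single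
`u`–`v` cut `C`: it deletes `min q |C ∩ Unsafe|` unsafe edges of `C` and then `p - 1` further
ones. Hence `u, v` are `(p, q)`-flex-connected iff every `u`–`v` cut has at least `p` safe edges
or at least `p + q` edges. Raising `q` to `q + 1` therefore only endangers the cuts of `H` with
exactly `p + q` edges and fewer than `p` safe ones, i.e. the violated cuts, and a single edge of
`H'` crossing such a cut repairs it.
-/

open Finset

/-- The cut condition for `(p, q)`-flex-connectivity across a cut with edge set `C`. -/
def IsFlexCut {E : Type*} (Unsafe : Finset E) (p q : ℕ) (C : Finset E) : Prop :=
  p ≤ #(C \ Unsafe) ∨ p + q ≤ #C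

section Counting

variable {E : Type*} {Unsafe C : Finset E} {p q : ℕ}

theorem isFlexCut_iff_forall_le_card_sdiff :
    IsFlexCut Unsafe p q C ↔ ∀ U ⊆ Unsafe, #U ≤ q → p ≤ #(C \ U) := by
  constructor
  · rintro hC U hU hUq
    have hsafe : #(C \ Unsafe) ≤ #(C \ U) := card_le_card (sdiff_subset_sdiff le_rfl hU)
    have hall := le_card_sdiff U C
    rcases hC with hC | hC <;> omega
  · intro h
    by_contra hC
    simp only [IsFlexCut, not_or, not_le] at hC
    obtain ⟨U, hUC, hUcard⟩ :=
      exists_subset_card_eq (s := C ∩ Unsafe) (min_le_right q #(C ∩ Unsafe))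
    have hU := h U (hUC.trans inter_subset_right) (by omega)
    rw [card_sdiff_of_subset (hUC.trans inter_subset_left)] at hU
    have hsplit := card_sdiff_add_card_inter C Unsafe
    omega

theorem isFlexCut_union_succ_iff {C' : Finset E} (hdisj : Disjoint C C')
    (hC : IsFlexCut Unsafe p q C) :
    IsFlexCut Unsafe p (q + 1) (C ∪ C') ↔ (#C = p + q → #(C \ Unsafe) < p → C'.Nonempty) := by
  have hsafe : #(C \ Unsafe) ≤ #((C ∪ C') \ Unsafe) :=
    card_le_card (sdiff_subset_sdiff subset_union_left le_rfl)
  have hunion : #(C ∪ C') = #C + #C' := card_union_of_disjoint hdisj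
  constructor
  · intro h hCcard hCsafe
    by_contra hC'
    rw [not_nonempty_iff_eq_empty.1 hC', union_empty] at h
    rcases h with h | h <;> omega
  · intro h
    by_cases htight : #C = p + q ∧ #(C \ Unsafe) < p
    · have hC' := card_pos.2 (h htight.1 htight.2)
      exact Or.inr (by omega)
    · unfold IsFlexCut at hC ⊢
      omega

end Counting

section Cuts

variable {V E : Type*} (g₁ g₂ : E → V)

theorem mem_cutEdges {H : Finset E} {S : Finset V} {e : E} :
    e ∈ cutEdges g₁ g₂ H S ↔ e ∈ H ∧ ((g₁ e ∈ S) ≠ (g₂ e ∈ S)) :=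
  mem_filter

theorem cutEdges_subset (H : Finset E) (S : Finset V) : cutEdges g₁ g₂ H S ⊆ H :=
  filter_subset _ _

theorem cutEdges_sdiff (H U : Finset E) (S : Finset V) :
    cutEdges g₁ g₂ (H \ U) S = cutEdges g₁ g₂ H S \ U := by
  ext e
  simp only [mem_cutEdges, mem_sdiff]
  tauto

theorem cutEdges_union (H H' : Finset E) (S : Finset V) :
    cutEdges g₁ g₂ (H ∪ H') S = cutEdges g₁ g₂ H S ∪ cutEdges g₁ g₂ H' S :=
  filter_union _ _ _

theorem connectedIn_iff_forall_cutEdges_nonempty [Fintype V] {K : Finset E} {u v : V} :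
    ConnectedIn g₁ g₂ K u v ↔
      ∀ S : Finset V, (u ∈ S) ≠ (v ∈ S) → (cutEdges g₁ g₂ K S).Nonempty := by
  constructor
  · intro h
    induction h with
    | refl => exact fun S hS => absurd rfl hS
    | @tail b c _ hbc ih =>
      intro S hS
      by_cases hb : (u ∈ S) = (b ∈ S)
      · obtain ⟨e, he, hends⟩ := hbc
        refine ⟨e, (mem_cutEdges g₁ g₂).2 ⟨he, ?_⟩⟩
        rcases hends with ⟨h₁, h₂⟩ | ⟨h₁, h₂⟩ <;> rw [h₁, h₂] <;> grind
      · exact ih S hb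
  · intro h
    by_contra hv
    -- the component of `u` in `K` would be a cut that no edge of `K` crosses
    obtain ⟨e, he⟩ := h (univ.filter (ConnectedIn g₁ g₂ K u)) fun hu => by
      simp only [mem_filter, mem_univ, true_and] at hu
      exact hv (hu ▸ Relation.ReflTransGen.refl)
    obtain ⟨heK, hcross⟩ := (mem_cutEdges g₁ g₂).1 he
    refine hcross (propext ⟨fun h₁ => ?_, fun h₂ => ?_⟩)
    · simp only [mem_filter, mem_univ, true_and] at h₁ ⊢
      exact h₁.tail ⟨e, heK, Or.inl ⟨rfl, rfl⟩⟩
    · simp only [mem_filter, mem_univ, true_and] at h₂ ⊢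
      exact h₂.tail ⟨e, heK, Or.inr ⟨rfl, rfl⟩⟩

theorem pEdgeConnected_iff_forall_le_card_cutEdges [Fintype V] {p : ℕ} (hp : 1 ≤ p)
    {K : Finset E} {u v : V} :
    PEdgeConnected g₁ g₂ p K u v ↔
      ∀ S : Finset V, (u ∈ S) ≠ (v ∈ S) → p ≤ #(cutEdges g₁ g₂ K S) := by
  simp only [PEdgeConnected, connectedIn_iff_forall_cutEdges_nonempty, cutEdges_sdiff]
  constructor
  · intro h S hS
    by_contra hlt
    have hcut := h _ (cutEdges_subset g₁ g₂ K S) (by omega) S hS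
    rw [sdiff_self] at hcut
    exact not_nonempty_empty hcut
  · intro h D _ hD S hS
    have hcut := h S hS
    have hrest := le_card_sdiff D (cutEdges g₁ g₂ K S)
    exact card_pos.1 (by omega)

theorem flexConnected_iff_forall_isFlexCut [Fintype V] {Unsafe : Finset E} {p q : ℕ}
    (hp : 1 ≤ p) {H : Finset E} {u v : V} :
    FlexConnected g₁ g₂ Unsafe p q H u v ↔
      ∀ S : Finset V, (u ∈ S) ≠ (v ∈ S) → IsFlexCut Unsafe p q (cutEdges g₁ g₂ H S) := by
  simp only [FlexConnected, pEdgeConnected_iff_forall_le_card_cutEdges g₁ g₂ hp,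
    cutEdges_sdiff, isFlexCut_iff_forall_le_card_sdiff]
  exact ⟨fun h S hS U hU hUq => h U hU hUq S hS, fun h U hU hUq S hS => h S hS U hU hUq⟩

end Cuts

/-- Every terminal pair is `(p, q+1)`-flex-connected in `H ∪ H'` iff `H'` covers all
violated cuts. -/
theorem flex_augment_iff_covers_violated_cuts {V E : Type*} [Fintype V] [Fintype E]
    (g₁ g₂ : E → V) (Safe Unsafe : Finset E) (hpart : Unsafe = Safeᶜ)
    (p q : ℕ) (hp : 1 ≤ p) (k : ℕ) (st : Fin k → V × V) (H : Finset E)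
    (hH : ∀ i : Fin k, FlexConnected g₁ g₂ Unsafe p q H (st i).1 (st i).2)
    (H' : Finset E) (hH' : Disjoint H' H) :
    (∀ i : Fin k, FlexConnected g₁ g₂ Unsafe p (q + 1) (H ∪ H') (st i).1 (st i).2) ↔
      ∀ S : Finset V, Violated g₁ g₂ Safe p q st H S →
        (cutEdges g₁ g₂ H' S).Nonempty := by
  have hSafe : ∀ S, cutEdges g₁ g₂ H S ∩ Safe = cutEdges g₁ g₂ H S \ Unsafe := fun S => by
    rw [hpart, sdiff_compl, inf_eq_inter]
  have hcut : ∀ i S, ((st i).1 ∈ S) ≠ ((st i).2 ∈ S) →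
      (IsFlexCut Unsafe p (q + 1) (cutEdges g₁ g₂ (H ∪ H') S) ↔
        (#(cutEdges g₁ g₂ H S) = p + q → #(cutEdges g₁ g₂ H S ∩ Safe) ≤ p - 1 →
          (cutEdges g₁ g₂ H' S).Nonempty)) := fun i S hS => by
    rw [cutEdges_union, hSafe, Nat.le_sub_one_iff_lt hp]
    exact isFlexCut_union_succ_iff
      (hH'.symm.mono (cutEdges_subset g₁ g₂ H S) (cutEdges_subset g₁ g₂ H' S))
      ((flexConnected_iff_forall_isFlexCut g₁ g₂ hp).1 (hH i) S hS)
  simp only [flexConnected_iff_forall_isFlexCut g₁ g₂ hp]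
  constructor
  · rintro h S ⟨⟨i, hS⟩, hcard, hsafe⟩
    exact (hcut i S hS).1 (h i S hS) hcard hsafe
  · intro h i S hS
    exact (hcut i S hS).2 fun hcard hsafe => h S ⟨⟨i, hS⟩, hcard, hsafe⟩
end

section
/- Let x̃ : E → ℝ≥0 be edge capacities and let y be the induced tree-edge capacities. For every vertex set S ⊆ V(𝒯), letting S' = {M1(a) : a ∈ L ∩ S} be the set of M1-images of the leaves in S, we have Σ_{f ∈ δ_{E(𝒯)}(S)} y(f) ≥ Σ_{e ∈ δ_E(S')} x̃(e). -/
open scoped Classical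

/-- `(t₁, t₂ : TE → TV)` describes a (multi)graph which is a tree: it is connected and
every edge is a bridge. -/
def IsTree' {TV TE : Type*} [Fintype TE] (t₁ t₂ : TE → TV) : Prop :=
  (∀ a b : TV, ConnectedIn t₁ t₂ Finset.univ a b) ∧
    ∀ f : TE, ¬ ConnectedIn t₁ t₂ (Finset.univ \ {f}) (t₁ f) (t₂ f)

/-- `V_f`: the `M1`-images of the leaves (elements of `L`) lying in the connected component
of the tree with `f` deleted that contains the endpoint `t₁ f`. -/
noncomputable def compVerts {V TV TE : Type*} [Fintype TE] (t₁ t₂ : TE → TV)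
    (M1 : TV → V) (L : Finset TV) (f : TE) : Finset V :=
  (L.filter fun a => ConnectedIn t₁ t₂ (Finset.univ \ {f}) a (t₁ f)).image M1

/-- The capacity `y(f) = Σ_{e ∈ δ_E(V_f)} x(e)` induced on a tree edge `f` by
capacities `x` on the edges of `G`. -/
noncomputable def treeCap {V E TV TE : Type*} [Fintype E] [Fintype TE]
    (g₁ g₂ : E → V) (t₁ t₂ : TE → TV) (M1 : TV → V) (L : Finset TV)
    (x : E → NNReal) (f : TE) : NNReal :=
  ∑ e ∈ cutEdges g₁ g₂ Finset.univ (compVerts t₁ t₂ M1 L f), x e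

/-- `M^{-1}(F)`: tree edges `f` with `M2(f) ∩ F ≠ ∅`. -/
noncomputable def Minv {E TE : Type*} [Fintype TE] (M2 : TE → Finset E) (F : Finset E) :
    Finset TE :=
  Finset.univ.filter fun f => (M2 f ∩ F).Nonempty

/-- `M(E') = ⋃_{f ∈ E'} M2(f)`. -/
noncomputable def Mimg {E TE : Type*} (M2 : TE → Finset E) (E' : Finset TE) : Finset E :=
  E'.biUnion M2

/-- The connected component containing `v` of the graph on `V` with edge set `H`. -/
noncomputable def Qcomp {V E : Type*} [Fintype V] (g₁ g₂ : E → V) (H : Finset E) (v : V) :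
    Finset V :=
  Finset.univ.filter fun u => ConnectedIn g₁ g₂ H u v

/-- A vertex set `Q` is shattered (w.r.t. the tree and `M^{-1}(F)`): the leaves whose
`M1`-images lie in `Q` are not all in a single connected component of the tree with the
edges of `M^{-1}(F)` deleted. -/
def IsShattered {V E TV TE : Type*} [Fintype TE] (t₁ t₂ : TE → TV) (M1 : TV → V)
    (L : Finset TV) (M2 : TE → Finset E) (F : Finset E) (Q : Finset V) : Prop :=
  ∃ a ∈ L, ∃ b ∈ L, M1 a ∈ Q ∧ M1 b ∈ Q ∧
    ¬ ConnectedIn t₁ t₂ (Finset.univ \ Minv M2 F) a b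

/-- `Z_F`: the pairs `(A ∪ Q_{s_i}, B ∪ Q_{t_i})` over `i ∈ [k]` and pairs `(A, B)`
partitioning the union of the shattered components of `(V, H \ F)`, each shattered
component lying entirely in `A` or entirely in `B`, such that the two sets of the pair
are disjoint. -/
def ZF {V E TV TE : Type*} [Fintype V] [Fintype TE] (g₁ g₂ : E → V) (t₁ t₂ : TE → TV)
    (M1 : TV → V) (L : Finset TV) (M2 : TE → Finset E) {k : ℕ} (st : Fin k → V × V)
    (H F : Finset E) : Set (Finset V × Finset V) :=
  { P | ∃ i : Fin k, ∃ A B : Finset V,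
      Disjoint A B ∧
      A ∪ B = Finset.univ.filter
        (fun v => IsShattered t₁ t₂ M1 L M2 F (Qcomp g₁ g₂ (H \ F) v)) ∧
      (∀ v : V, IsShattered t₁ t₂ M1 L M2 F (Qcomp g₁ g₂ (H \ F) v) →
        Qcomp g₁ g₂ (H \ F) v ⊆ A ∨ Qcomp g₁ g₂ (H \ F) v ⊆ B) ∧
      P.1 = A ∪ Qcomp g₁ g₂ (H \ F) (st i).1 ∧
      P.2 = B ∪ Qcomp g₁ g₂ (H \ F) (st i).2 ∧
      Disjoint P.1 P.2 }

/-- The number of shattered connected components of `(V, H \ F)`. -/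
noncomputable def shatteredCount {V E TV TE : Type*} [Fintype V] [Fintype TE]
    (g₁ g₂ : E → V) (t₁ t₂ : TE → TV) (M1 : TV → V) (L : Finset TV)
    (M2 : TE → Finset E) (H F : Finset E) : ℕ :=
  ((Finset.univ.image fun v => Qcomp g₁ g₂ (H \ F) v).filter
    fun Q => IsShattered t₁ t₂ M1 L M2 F Q).card

/-! An edge of `G` in `δ_E(S')` joins `M1 a` and `M1 b` for leaves `a ∈ S`, `b ∉ S`. The mod-2
potential `[v ∈ S] + #{f ∈ δ(S) | v is on the side of f containing t₁ f}` does not change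
across a tree edge `e`: only the term of `f = e` in the count changes, and it is present
exactly when `[v ∈ S]` changes. So the potential is constant on the tree, and some `f ∈ δ(S)`
has `a` and `b` on different sides, i.e. the edge lies in `δ_E(V_f)`. Thus
`δ_E(S') ⊆ ⋃_{f ∈ δ(S)} δ_E(V_f)`, and summing `x̃` gives the bound. -/

open Finset

theorem Finset.sum_biUnion_le_sum_sum {ι α M : Type*} [DecidableEq α] [AddCommMonoid M]
    [PartialOrder M] [CanonicallyOrderedAdd M]
    (s : Finset ι) (t : ι → Finset α) (x : α → M) :
    ∑ a ∈ s.biUnion t, x a ≤ ∑ i ∈ s, ∑ a ∈ t i, x a := by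
  have hunion : s.biUnion t = (s.sigma fun i => t i).image Sigma.snd := by
    ext a
    simp
  calc ∑ a ∈ s.biUnion t, x a
      ≤ ∑ p ∈ s.sigma (fun i => t i), x p.2 := by
        rw [hunion]
        exact sum_image_le_of_nonneg fun _ _ => zero_le
    _ = ∑ i ∈ s, ∑ a ∈ t i, x a := sum_sigma _ _ _

theorem Finset.mem_image_iff_of_injOn {α β : Type*} [DecidableEq β] {f : α → β} {s L : Finset α}
    (hf : Set.InjOn f L) (hs : s ⊆ L) {a : α} (ha : a ∈ L) : f a ∈ s.image f ↔ a ∈ s := by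
  rw [← mem_coe, coe_image]
  exact hf.mem_image_iff (coe_subset.mpr hs) ha

namespace ConnectedIn

variable {V E : Type*} {g₁ g₂ : E → V} {H : Finset E} {u v : V}

theorem of_mem {e : E} (he : e ∈ H) : ConnectedIn g₁ g₂ H (g₁ e) (g₂ e) :=
  .single ⟨e, he, .inl ⟨rfl, rfl⟩⟩

theorem symm (h : ConnectedIn g₁ g₂ H u v) : ConnectedIn g₁ g₂ H v u := by
  unfold ConnectedIn at h ⊢
  induction h with
  | refl => exact .refl
  | tail _ hstep ih =>
    obtain ⟨e, he, hends⟩ := hstep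
    exact .head ⟨e, he, hends.symm⟩ ih

theorem eq_of_forall_mem {α : Type*} (φ : V → α) (hφ : ∀ e ∈ H, φ (g₁ e) = φ (g₂ e))
    (h : ConnectedIn g₁ g₂ H u v) : φ u = φ v := by
  unfold ConnectedIn at h
  induction h with
  | refl => rfl
  | tail _ hstep ih =>
    obtain ⟨e, he, ⟨rfl, rfl⟩ | ⟨rfl, rfl⟩⟩ := hstep
    · exact ih.trans (hφ e he)
    · exact ih.trans (hφ e he).symm

end ConnectedIn

section Tree

variable {TV TE : Type*} [Fintype TE] {t₁ t₂ : TE → TV}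

def TailSide (t₁ t₂ : TE → TV) (f : TE) (v : TV) : Prop :=
  ConnectedIn t₁ t₂ (univ \ {f}) v (t₁ f)

theorem tailSide_tail (f : TE) : TailSide t₁ t₂ f (t₁ f) :=
  Relation.ReflTransGen.refl

theorem not_tailSide_head {f : TE} (hf : ¬ ConnectedIn t₁ t₂ (univ \ {f}) (t₁ f) (t₂ f)) :
    ¬ TailSide t₁ t₂ f (t₂ f) :=
  fun h => hf h.symm

theorem tailSide_tail_iff_head {e f : TE} (hef : e ≠ f) :
    TailSide t₁ t₂ f (t₁ e) ↔ TailSide t₁ t₂ f (t₂ e) := by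
  have h : ConnectedIn t₁ t₂ (univ \ {f}) (t₁ e) (t₂ e) := .of_mem (by simpa using hef)
  exact ⟨Relation.ReflTransGen.trans h.symm, Relation.ReflTransGen.trans h⟩

noncomputable def cutPotential (t₁ t₂ : TE → TV) (S : Finset TV) (v : TV) : ZMod 2 :=
  (if v ∈ S then 1 else 0) + ∑ f ∈ cutEdges t₁ t₂ univ S, if TailSide t₁ t₂ f v then 1 else 0

theorem cutPotential_tail_eq_head {e : TE}
    (he : ¬ ConnectedIn t₁ t₂ (univ \ {e}) (t₁ e) (t₂ e)) (S : Finset TV) :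
    cutPotential t₁ t₂ S (t₁ e) = cutPotential t₁ t₂ S (t₂ e) := by
  have hterm : ∀ f, (if TailSide t₁ t₂ f (t₁ e) then 1 else 0 : ZMod 2) =
      (if TailSide t₁ t₂ f (t₂ e) then 1 else 0) + if f = e then 1 else 0 := by
    intro f
    by_cases hfe : f = e
    · subst hfe
      simp [tailSide_tail, not_tailSide_head he]
    · rw [if_neg hfe, add_zero, tailSide_tail_iff_head (Ne.symm hfe)]
  have hcut : (if t₁ e ∈ S then 1 else 0 : ZMod 2) +
      (if (t₁ e ∈ S) ≠ (t₂ e ∈ S) then 1 else 0) = if t₂ e ∈ S then 1 else 0 := by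
    by_cases h₁ : t₁ e ∈ S <;> by_cases h₂ : t₂ e ∈ S <;> simp [h₁, h₂]
    exact CharTwo.add_self_eq_zero 1
  simp only [cutPotential, hterm, sum_add_distrib, sum_ite_eq', cutEdges, mem_filter, mem_univ,
    true_and]
  linear_combination hcut

theorem cutPotential_eq (htree : IsTree' t₁ t₂) (S : Finset TV) (a b : TV) :
    cutPotential t₁ t₂ S a = cutPotential t₁ t₂ S b :=
  (htree.1 a b).eq_of_forall_mem _ fun e _ => cutPotential_tail_eq_head (htree.2 e) S

theorem exists_mem_cutEdges_tailSide_ne (htree : IsTree' t₁ t₂) {S : Finset TV} {a b : TV}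
    (hab : (a ∈ S) ≠ (b ∈ S)) :
    ∃ f ∈ cutEdges t₁ t₂ univ S, TailSide t₁ t₂ f a ≠ TailSide t₁ t₂ f b := by
  by_contra! hsame
  have hpot := cutPotential_eq htree S a b
  rw [cutPotential, cutPotential, sum_congr rfl fun f hf => by rw [hsame f hf],
    add_left_inj] at hpot
  by_cases ha : a ∈ S <;> by_cases hb : b ∈ S <;> simp_all

end Tree

theorem mem_compVerts_iff {V TV TE : Type*} [Fintype TE] {t₁ t₂ : TE → TV} {M1 : TV → V}
    {L : Finset TV} (hM1 : Set.InjOn M1 L) (f : TE) {a : TV} (ha : a ∈ L) :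
    M1 a ∈ compVerts t₁ t₂ M1 L f ↔ TailSide t₁ t₂ f a := by
  rw [compVerts, mem_image_iff_of_injOn hM1 (filter_subset _ _) ha, mem_filter]
  exact and_iff_right ha

theorem cutEdges_image_subset_biUnion {V E TV TE : Type*} [Fintype E] [Fintype TE]
    (g₁ g₂ : E → V) {t₁ t₂ : TE → TV} (htree : IsTree' t₁ t₂) {M1 : TV → V} {L : Finset TV}
    (hM1 : Set.BijOn M1 (↑L) Set.univ) (S : Finset TV) :
    cutEdges g₁ g₂ univ ((L ∩ S).image M1) ⊆
      (cutEdges t₁ t₂ univ S).biUnion fun f => cutEdges g₁ g₂ univ (compVerts t₁ t₂ M1 L f) := by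
  intro e he
  obtain ⟨a, ha : a ∈ L, ha'⟩ := hM1.surjOn (Set.mem_univ (g₁ e))
  obtain ⟨b, hb : b ∈ L, hb'⟩ := hM1.surjOn (Set.mem_univ (g₂ e))
  simp only [cutEdges, mem_filter, mem_univ, true_and] at he
  rw [← ha', ← hb', mem_image_iff_of_injOn hM1.injOn inter_subset_left ha,
    mem_image_iff_of_injOn hM1.injOn inter_subset_left hb] at he
  obtain ⟨f, hf, hsides⟩ := exists_mem_cutEdges_tailSide_ne htree (by simpa [ha, hb] using he)
  refine mem_biUnion.mpr ⟨f, hf, ?_⟩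
  simp only [cutEdges, mem_filter, mem_univ, true_and]
  rwa [← ha', ← hb', mem_compVerts_iff hM1.injOn f ha, mem_compVerts_iff hM1.injOn f hb]

theorem treeCut_ge_graphCut_general {V E TV TE : Type*} [Fintype E] [Fintype TE]
    (g₁ g₂ : E → V) (t₁ t₂ : TE → TV) (htree : IsTree' t₁ t₂)
    (M1 : TV → V) (L : Finset TV) (hM1 : Set.BijOn M1 (↑L) Set.univ)
    (x : E → NNReal) (S : Finset TV) :
    ∑ e ∈ cutEdges g₁ g₂ Finset.univ ((L ∩ S).image M1), x e ≤
      ∑ f ∈ cutEdges t₁ t₂ Finset.univ S, treeCap g₁ g₂ t₁ t₂ M1 L x f :=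
  calc ∑ e ∈ cutEdges g₁ g₂ univ ((L ∩ S).image M1), x e
      ≤ ∑ e ∈ (cutEdges t₁ t₂ univ S).biUnion
          (fun f => cutEdges g₁ g₂ univ (compVerts t₁ t₂ M1 L f)), x e :=
        sum_le_sum_of_subset (cutEdges_image_subset_biUnion g₁ g₂ htree hM1 S)
    _ ≤ ∑ f ∈ cutEdges t₁ t₂ univ S, treeCap g₁ g₂ t₁ t₂ M1 L x f :=
        sum_biUnion_le_sum_sum _ _ _

/-- For every tree vertex set `S`, the induced tree capacity of the cut `δ_{E(𝒯)}(S)` is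
at least the capacity of the cut `δ_E(S')` in `G`, where `S'` is the set of `M1`-images
of the leaves in `S`. -/
theorem treeCut_ge_graphCut {V E TV TE : Type*} [Fintype V] [Fintype E] [Fintype TE]
    (g₁ g₂ : E → V) (t₁ t₂ : TE → TV) (htree : IsTree' t₁ t₂)
    (M1 : TV → V) (L : Finset TV) (hM1 : Set.BijOn M1 (↑L) Set.univ)
    (x : E → NNReal) (S : Finset TV) :
    ∑ e ∈ cutEdges g₁ g₂ Finset.univ ((L ∩ S).image M1), x e ≤
      ∑ f ∈ cutEdges t₁ t₂ Finset.univ S, treeCap g₁ g₂ t₁ t₂ M1 L x f :=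
  treeCut_ge_graphCut_general g₁ g₂ t₁ t₂ htree M1 L hM1 x S
end
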